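/- arXiv:0905.1738 — 2 statements merged into one kernel-verified Lean document; each statement's English description precedes it below -/
import Mathlib

section
/- Let $N$, $\{Q, Q_i\}$, $\{C, C_i\}$ be as in the weighted branching process setup with $W_0 = Q$, $W_n \stackrel{\mathcal{D}}{=} \sum_{i=1}^N C_i W_{n-1,i}$. Suppose $E[Q^p] < \infty$, $E[N^p] < \infty$, and $E[N]\max\{E[C^p], E[C]\} < 1$ for some integer $p \geq 2$. Then there exists a constant $K_p > 0$ such that $E[W_n^p] \leq K_p \left( E[N]\max\{E[C], E[C^p]\} \right)^n$ for all $n \geq 0$. -/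
/-!
Write `a m n = E[W_n^m]`, computed in `ℝ≥0∞`. Conditioning on `N` and expanding
`(∑ C_i W_i)^m` by independence, the terms in which all `m` indices coincide contribute
`E[N] E[C^m] a m n`, while every other term is a product of at least two lower moments. If the
lower moments are `O(ρ^n)`, this gives `a m (n+1) ≤ ρ a m n + D ρ^(2n)`, which forces
`a m n = O(ρ^n)`; induction on `m` finishes. Lyapunov's inequality
`E[C^m] ≤ max (E[C]) (E[C^p])` for `1 ≤ m ≤ p` is what makes `ρ = E[N] max (E[C]) (E[C^p])` a
common rate for all `m ≤ p`.
-/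

open MeasureTheory ProbabilityTheory Finset
open scoped ENNReal NNReal

/-- The distributional recursion defining the generation weights of a weighted
branching process: `W 0` is distributed as `Q`, and `W (n+1)` is distributed as
`∑_{i=1}^{N'} C'_i W'_{n,i}` where `N'` is a copy of `N`, the `C'_i` are iid copies
of `C`, the `W'_i` are iid copies of `W n`, and all of them are mutually independent. -/
def IsWBP {Ω : Type*} [MeasureSpace Ω]
    (N : Ω → ℕ) (C : Ω → ℝ) (Q : Ω → ℝ) (W : ℕ → Ω → ℝ) : Prop :=
  Measurable N ∧ Measurable C ∧ Measurable Q ∧ (∀ n, Measurable (W n)) ∧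
  (∀ ω, 0 ≤ C ω) ∧ (∀ ω, 0 ≤ Q ω) ∧ (∀ n ω, 0 ≤ W n ω) ∧
  Measure.map (W 0) ℙ = Measure.map Q ℙ ∧
  ∀ n, ∃ (N' : Ω → ℕ) (C' : ℕ → Ω → ℝ) (W' : ℕ → Ω → ℝ),
    Measurable N' ∧ (∀ i, Measurable (C' i)) ∧ (∀ i, Measurable (W' i)) ∧
    Measure.map N' ℙ = Measure.map N ℙ ∧
    (∀ i, Measure.map (C' i) ℙ = Measure.map C ℙ) ∧
    (∀ i, Measure.map (W' i) ℙ = Measure.map (W n) ℙ) ∧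
    iIndepFun
      (fun j : (ℕ ⊕ ℕ) ⊕ Unit =>
        Sum.elim (Sum.elim C' W') (fun _ ω => (N' ω : ℝ)) j) ℙ ∧
    Measure.map (W (n + 1)) ℙ =
      Measure.map (fun ω => ∑ i ∈ Finset.range (N' ω), C' i ω * W' i ω) ℙ

open Fintype

section Combinatorics

variable {q : ℕ} (u : ℕ → ℝ≥0∞)

lemma prod_fiber_eq_of_card_image_eq_one {g : Fin q → ℕ} (hg : #(univ.image g) = 1) :
    ∏ j ∈ univ.image g, u #{i | g i = j} = u q := by
  obtain ⟨a, ha⟩ := card_eq_one.1 hg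
  have hga : ∀ i, g i = a := fun i => mem_singleton.1 (ha ▸ mem_image_of_mem g (mem_univ i))
  simp [ha, hga]

lemma prod_fiber_le_of_one_lt_card_image {B : ℝ≥0∞} (hB : ∀ m, 1 ≤ m → m < q → u m ≤ B)
    {g : Fin q → ℕ} (hg : 1 < #(univ.image g)) :
    ∏ j ∈ univ.image g, u #{i | g i = j} ≤ B ^ 2 * max B 1 ^ q := by
  have hfactor : ∀ j ∈ univ.image g, u #{i | g i = j} ≤ B := by
    intro j hj
    obtain ⟨i, -, rfl⟩ := mem_image.1 hj
    obtain ⟨_, hj', hne⟩ := exists_mem_ne hg (g i)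
    obtain ⟨i', -, rfl⟩ := mem_image.1 hj'
    refine hB _ (card_pos.2 ⟨i, by simp⟩) ?_
    simpa using card_lt_card (filter_ssubset.2 ⟨i', mem_univ _, hne⟩)
  have hcard : #(univ.image g) ≤ q := card_image_le.trans (by simp)
  calc ∏ j ∈ univ.image g, u #{i | g i = j}
      ≤ B ^ #(univ.image g) := prod_le_pow_card _ _ _ hfactor
    _ = B ^ 2 * B ^ (#(univ.image g) - 2) := by rw [← pow_add]; congr 1; omega
    _ ≤ B ^ 2 * max B 1 ^ q := mul_le_mul_right ((pow_le_pow_left' (le_max_left B 1) _).trans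
        (pow_le_pow_right₀ (le_max_right B 1) (by omega))) _

lemma sum_prod_fiber_le (hq : 1 ≤ q) (k : ℕ) {B : ℝ≥0∞}
    (hB : ∀ m, 1 ≤ m → m < q → u m ≤ B) :
    ∑ g ∈ piFinset fun _ : Fin q => range k, ∏ j ∈ univ.image g, u #{i | g i = j}
      ≤ k * u q + k ^ q * (B ^ 2 * max B 1 ^ q) := by
  set P := piFinset fun _ : Fin q => range k
  have hconst : #{g ∈ P | #(univ.image g) = 1} ≤ k := by
    refine (card_le_card fun g hg => ?_).trans ((card_image_le (s := range k)
      (f := fun j (_ : Fin q) => j)).trans (card_range k).le)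
    obtain ⟨hgP, hg⟩ := mem_filter.1 hg
    obtain ⟨a, ha⟩ := card_eq_one.1 hg
    have hga : ∀ i, g i = a := fun i => mem_singleton.1 (ha ▸ mem_image_of_mem g (mem_univ i))
    refine mem_image.2 ⟨a, ?_, funext fun i => (hga i).symm⟩
    simpa [hga] using (mem_piFinset.1 hgP) ⟨0, hq⟩
  rw [← sum_filter_add_sum_filter_not P (fun g => #(univ.image g) = 1)]
  gcongr
  · calc _ ≤ #{g ∈ P | #(univ.image g) = 1} • u q :=
          sum_le_card_nsmul _ _ _ fun g hg =>
            (prod_fiber_eq_of_card_image_eq_one u (mem_filter.1 hg).2).le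
      _ ≤ k * u q := by rw [nsmul_eq_mul]; gcongr
  · calc _ ≤ #{g ∈ P | ¬#(univ.image g) = 1} • (B ^ 2 * max B 1 ^ q) := by
          refine sum_le_card_nsmul _ _ _ fun g hg => prod_fiber_le_of_one_lt_card_image u hB ?_
          have hne : (univ.image g).Nonempty := ⟨g ⟨0, hq⟩, mem_image_of_mem g (mem_univ _)⟩
          have := (mem_filter.1 hg).2
          have := hne.card_pos
          omega
      _ ≤ k ^ q * (B ^ 2 * max B 1 ^ q) := by
          rw [nsmul_eq_mul]; gcongr
          exact_mod_cast (card_filter_le _ _).trans (by simp [P])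

end Combinatorics

lemma exists_le_mul_pow_of_le_mul_add_mul_pow {a : ℕ → ℝ≥0∞} {ρ D : ℝ≥0∞} (hρ : ρ < 1)
    (ha : a 0 ≠ ⊤) (hD : D ≠ ⊤) (hD0 : ρ = 0 → D = 0)
    (hrec : ∀ n, a (n + 1) ≤ ρ * a n + D * ρ ^ (2 * n)) :
    ∃ K ≠ ⊤, ∀ n, a n ≤ K * ρ ^ n := by
  obtain rfl | hρ0 := eq_or_ne ρ 0
  · refine ⟨a 0, ha, fun n => ?_⟩
    cases n with
    | zero => simp
    | succ n => simpa [hD0 rfl] using hrec n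
  have hinv : ρ * ρ⁻¹ = 1 := ENNReal.mul_inv_cancel hρ0 hρ.ne_top
  have hpartial : ∀ n, a n ≤ (a 0 + D * ρ⁻¹ * ∑ j ∈ range n, ρ ^ j) * ρ ^ n := by
    intro n
    induction n with
    | zero => simp
    | succ n ih =>
      have herr : D * ρ ^ (2 * n) = D * ρ⁻¹ * ρ ^ n * ρ ^ (n + 1) := by
        calc D * ρ ^ (2 * n) = D * ρ ^ (2 * n) * (ρ * ρ⁻¹) := by rw [hinv, mul_one]
          _ = _ := by ring
      calc a (n + 1) ≤ ρ * a n + D * ρ ^ (2 * n) := hrec n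
        _ ≤ ρ * ((a 0 + D * ρ⁻¹ * ∑ j ∈ range n, ρ ^ j) * ρ ^ n) + D * ρ ^ (2 * n) := by gcongr
        _ = _ := by rw [herr, sum_range_succ]; ring
  refine ⟨a 0 + D * ρ⁻¹ * (1 - ρ)⁻¹, ?_, fun n => (hpartial n).trans ?_⟩
  · have h1ρ : 1 - ρ ≠ 0 := (tsub_pos_of_lt hρ).ne'
    simp [ENNReal.mul_eq_top, ha, hD, hρ0, h1ρ]
  · gcongr
    exact (ENNReal.sum_le_tsum _).trans (ENNReal.tsum_geometric ρ).le

section Moments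

variable {Ω : Type*} [MeasurableSpace Ω] {μ : Measure Ω}

noncomputable def lmoment (X : Ω → ℝ) (m : ℕ) (μ : Measure Ω) : ℝ≥0∞ :=
  ∫⁻ ω, ENNReal.ofReal (X ω) ^ m ∂μ

lemma lmoment_congr_of_map_eq {X Y : Ω → ℝ} (hX : Measurable X) (hY : Measurable Y)
    (h : μ.map X = μ.map Y) (m : ℕ) : lmoment X m μ = lmoment Y m μ := by
  have hφ : Measurable fun x : ℝ => ENNReal.ofReal x ^ m := by fun_prop
  rw [lmoment, lmoment, ← lintegral_map hφ hX, h, lintegral_map hφ hY]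

lemma lmoment_le_max {X : Ω → ℝ} (hX : AEMeasurable X μ) {m p : ℕ} (hm : 1 ≤ m) (hmp : m ≤ p) :
    lmoment X m μ ≤ max (lmoment X 1 μ) (lmoment X p μ) := by
  obtain rfl | hmp := hmp.eq_or_lt
  · exact le_max_right _ _
  have hp : (1 : ℝ) < p := by exact_mod_cast hm.trans_lt hmp
  have hmp' : (m : ℝ) < p := by exact_mod_cast hmp
  have hm' : (1 : ℝ) ≤ m := by exact_mod_cast hm
  -- Lyapunov: `m` is the convex combination `θ • 1 + (1 - θ) • p` of the exponents `1` and `p`.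
  set θ : ℝ := (p - m) / (p - 1)
  have hθ : 0 ≤ θ := div_nonneg (by linarith) (by linarith)
  have hθ' : 0 ≤ 1 - θ := by
    rw [sub_nonneg, div_le_one (by linarith)]; linarith
  have hexp : θ + p * (1 - θ) = m := by
    have : (p : ℝ) - 1 ≠ 0 := by linarith
    simp only [θ]; field_simp; ring
  set M := max (lmoment X 1 μ) (lmoment X p μ)
  have hf : AEMeasurable (fun ω => ENNReal.ofReal (X ω)) μ :=
    ENNReal.measurable_ofReal.comp_aemeasurable hX
  have hpt : ∀ x : ℝ≥0∞, x ^ θ * (x ^ p) ^ (1 - θ) = x ^ m := fun x => by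
    rw [← ENNReal.rpow_natCast x p, ← ENNReal.rpow_mul,
      ← ENNReal.rpow_add_of_nonneg _ _ hθ (by positivity), hexp, ENNReal.rpow_natCast]
  calc lmoment X m μ
      = ∫⁻ ω, ENNReal.ofReal (X ω) ^ θ * (ENNReal.ofReal (X ω) ^ p) ^ (1 - θ) ∂μ := by
        simp only [hpt, lmoment]
    _ ≤ lmoment X 1 μ ^ θ * lmoment X p μ ^ (1 - θ) := by
        simpa [lmoment] using ENNReal.lintegral_mul_norm_pow_le hf (hf.pow_const p) hθ hθ' (by ring)
    _ ≤ M ^ θ * M ^ (1 - θ) := by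
        gcongr
        exacts [le_max_left _ _, le_max_right _ _]
    _ = M := by rw [← ENNReal.rpow_add_of_nonneg _ _ hθ hθ', add_sub_cancel, ENNReal.rpow_one]

lemma lmoment_le_measure_univ_add {X : Ω → ℝ} {m p : ℕ} (hmp : m ≤ p) :
    lmoment X m μ ≤ μ Set.univ + lmoment X p μ := by
  have hpt : ∀ x : ℝ≥0∞, x ^ m ≤ 1 + x ^ p := fun x => by
    rcases le_total x 1 with hx | hx
    · exact (pow_le_one₀ zero_le hx).trans le_self_add
    · exact (pow_le_pow_right₀ hx hmp).trans le_add_self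
  calc lmoment X m μ ≤ ∫⁻ ω, 1 + ENNReal.ofReal (X ω) ^ p ∂μ := lintegral_mono fun ω => hpt _
    _ = μ Set.univ + lmoment X p μ := by rw [lintegral_add_left measurable_const]; simp [lmoment]

lemma lmoment_eq_ofReal_integral {X : Ω → ℝ} (h0 : ∀ ω, 0 ≤ X ω) {m : ℕ}
    (hint : Integrable (fun ω => X ω ^ m) μ) :
    lmoment X m μ = ENNReal.ofReal (∫ ω, X ω ^ m ∂μ) := by
  rw [ofReal_integral_eq_lintegral_ofReal hint (ae_of_all _ fun ω => pow_nonneg (h0 ω) m)]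
  exact lintegral_congr fun ω => (ENNReal.ofReal_pow (h0 ω) m).symm

lemma lmoment_ne_top_of_integrable_pow [IsFiniteMeasure μ] {X : Ω → ℝ} (h0 : ∀ ω, 0 ≤ X ω)
    {p : ℕ} (hint : Integrable (fun ω => X ω ^ p) μ) {m : ℕ} (hmp : m ≤ p) :
    lmoment X m μ ≠ ⊤ :=
  ne_top_of_le_ne_top (by simp [lmoment_eq_ofReal_integral h0 hint])
    (lmoment_le_measure_univ_add hmp)

lemma lmoment_one_eq_ofReal_integral {X : Ω → ℝ} (hX : AEStronglyMeasurable X μ)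
    (h0 : ∀ ω, 0 ≤ X ω) (h : lmoment X 1 μ ≠ ⊤) : lmoment X 1 μ = ENNReal.ofReal (∫ ω, X ω ∂μ) := by
  have hint : Integrable X μ :=
    ⟨hX, (hasFiniteIntegral_iff_ofReal (ae_of_all _ h0)).2 (by simpa [lmoment] using h.lt_top)⟩
  simpa using lmoment_eq_ofReal_integral h0 (m := 1) (by simpa using hint)

lemma lmoment_eq_zero_of_lmoment_one_eq_zero {X : Ω → ℝ} (hX : AEMeasurable X μ)
    (h : lmoment X 1 μ = 0) (m : ℕ) (hm : 1 ≤ m) : lmoment X m μ = 0 := by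
  have hf : AEMeasurable (fun ω => ENNReal.ofReal (X ω)) μ :=
    ENNReal.measurable_ofReal.comp_aemeasurable hX
  simp only [lmoment, pow_one, lintegral_eq_zero_iff' hf] at h
  rw [lmoment, lintegral_eq_zero_iff' (hf.pow_const m)]
  filter_upwards [h] with ω hω
  simp [hω, zero_pow (by omega : m ≠ 0)]

lemma lmoment_natCast_eq_tsum {N : Ω → ℕ} (hN : Measurable N) (m : ℕ) :
    lmoment (fun ω => (N ω : ℝ)) m μ = ∑' k, μ {ω | N ω = k} * (k : ℝ≥0∞) ^ m := by
  have hφ : Measurable fun k : ℕ => (k : ℝ≥0∞) ^ m := measurable_from_top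
  simp only [lmoment, ENNReal.ofReal_natCast]
  rw [← lintegral_map hφ hN, lintegral_countable']
  refine tsum_congr fun k => ?_
  rw [Measure.map_apply hN (measurableSet_singleton k), mul_comm]
  rfl

lemma ae_nonneg_of_map_eq {X Y : Ω → ℝ} (hX : Measurable X) (hY : Measurable Y)
    (hXY : μ.map X = μ.map Y) (hY0 : ∀ ω, 0 ≤ Y ω) : ∀ᵐ ω ∂μ, 0 ≤ X ω := by
  have h : ∀ᵐ y ∂μ.map Y, 0 ≤ y :=
    (ae_map_iff hY.aemeasurable measurableSet_Ici).2 (ae_of_all _ hY0)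
  rw [← hXY] at h
  exact (ae_map_iff hX.aemeasurable measurableSet_Ici).1 h

lemma measurable_sum_range {N : Ω → ℕ} (hN : Measurable N) {Y : ℕ → Ω → ℝ}
    (hY : ∀ i, Measurable (Y i)) : Measurable fun ω => ∑ i ∈ range (N ω), Y i ω := by
  have hpair : Measurable fun x : Ω × ℕ => ∑ i ∈ range x.2, Y i x.1 :=
    measurable_from_prod_countable_left fun k => by
      dsimp only; exact Finset.measurable_sum _ fun i _ => hY i
  exact hpair.comp (measurable_id.prodMk hN)

section RandomSum

variable {N' : Ω → ℕ} {C' W' : ℕ → Ω → ℝ}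

lemma lintegral_indicator_mul_prod_eq (hN' : Measurable N') (hC' : ∀ i, Measurable (C' i))
    (hW' : ∀ i, Measurable (W' i))
    (hind : iIndepFun (fun j : (ℕ ⊕ ℕ) ⊕ Unit =>
      Sum.elim (Sum.elim C' W') (fun _ ω => (N' ω : ℝ)) j) μ)
    (k : ℕ) {q : ℕ} (g : Fin q → ℕ) :
    ∫⁻ ω, {ω | N' ω = k}.indicator 1 ω *
        ∏ i, ENNReal.ofReal (C' (g i) ω) * ENNReal.ofReal (W' (g i) ω) ∂μ
      = μ {ω | N' ω = k} * ∏ j ∈ univ.image g,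
          lmoment (C' j) #{i | g i = j} μ * lmoment (W' j) #{i | g i = j} μ := by
  set S := univ.image g
  -- `φ t` turns coordinate `t` of the independent family into its factor of the integrand.
  set φ : (ℕ ⊕ ℕ) ⊕ Unit → ℝ → ℝ≥0∞ :=
    Sum.elim (Sum.elim (fun j x => ENNReal.ofReal x ^ #{i | g i = j})
      (fun j x => ENNReal.ofReal x ^ #{i | g i = j})) (fun _ => ({(k : ℝ)} : Set ℝ).indicator 1)
  have hφ : ∀ t, Measurable (φ t) := by
    rintro ((j | j) | _)
    · exact ENNReal.measurable_ofReal.pow_const _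
    · exact ENNReal.measurable_ofReal.pow_const _
    · exact measurable_one.indicator (measurableSet_singleton _)
  have hX : ∀ t : (ℕ ⊕ ℕ) ⊕ Unit,
      Measurable (Sum.elim (Sum.elim C' W') (fun _ ω => (N' ω : ℝ)) t) := by
    rintro ((j | j) | _)
    exacts [hC' j, hW' j, measurable_from_top.comp hN']
  have hcount : ∀ ω, ({(k : ℝ)} : Set ℝ).indicator 1 (N' ω : ℝ)
      = {ω | N' ω = k}.indicator (1 : Ω → ℝ≥0∞) ω := fun ω => by
    simp [Set.indicator_apply]
  have hprod := lintegral_prod_eq_prod_lintegral_of_indepFun ((S.disjSum S).disjSum univ)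
    _ (hind.comp φ hφ) fun t => (hφ t).comp (hX t)
  simp only [prod_disjSum, univ_unique, prod_singleton, Function.comp_apply, φ, Sum.elim_inl,
    Sum.elim_inr, hcount] at hprod
  calc _ = ∫⁻ ω, ((∏ j ∈ S, ENNReal.ofReal (C' j ω) ^ #{i | g i = j}) *
        ∏ j ∈ S, ENNReal.ofReal (W' j ω) ^ #{i | g i = j}) * {ω | N' ω = k}.indicator 1 ω ∂μ := by
        congr with ω
        rw [prod_mul_distrib, prod_comp (fun j => ENNReal.ofReal (C' j ω)) g,
          prod_comp (fun j => ENNReal.ofReal (W' j ω)) g, mul_comm]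
    _ = _ := by
        rw [hprod, lintegral_indicator_one (s := {ω | N' ω = k}) (hN' (measurableSet_singleton k)),
          prod_mul_distrib, mul_comm]
        rfl

lemma lintegral_pow_sum_range_eq_tsum (hN' : Measurable N') (hC' : ∀ i, Measurable (C' i))
    (hW' : ∀ i, Measurable (W' i))
    (hind : iIndepFun (fun j : (ℕ ⊕ ℕ) ⊕ Unit =>
      Sum.elim (Sum.elim C' W') (fun _ ω => (N' ω : ℝ)) j) μ) (q : ℕ) :
    ∫⁻ ω, (∑ i ∈ range (N' ω), ENNReal.ofReal (C' i ω) * ENNReal.ofReal (W' i ω)) ^ q ∂μ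
      = ∑' k, μ {ω | N' ω = k} * ∑ g ∈ piFinset fun _ : Fin q => range k, ∏ j ∈ univ.image g,
          lmoment (C' j) #{i | g i = j} μ * lmoment (W' j) #{i | g i = j} μ := by
  set Y : ℕ → Ω → ℝ≥0∞ := fun i ω => ENNReal.ofReal (C' i ω) * ENNReal.ofReal (W' i ω)
  have hY : ∀ i, Measurable (Y i) := fun i => by fun_prop
  have hpt : ∀ ω, (∑ i ∈ range (N' ω), Y i ω) ^ q = ∑' k, ∑ g ∈ piFinset fun _ : Fin q => range k,
      {ω | N' ω = k}.indicator 1 ω * ∏ i, Y (g i) ω := by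
    intro ω
    rw [tsum_eq_single (N' ω) fun k hk => by simp [Ne.symm hk]]
    simp [sum_pow']
  have hterm : ∀ k (g : Fin q → ℕ),
      Measurable fun ω => {ω | N' ω = k}.indicator 1 ω * ∏ i, Y (g i) ω := fun k g =>
    (measurable_one.indicator (hN' (measurableSet_singleton k))).mul
      (Finset.measurable_prod _ fun i _ => hY (g i))
  rw [lintegral_congr hpt, lintegral_tsum fun k =>
    (Finset.measurable_sum _ fun g _ => hterm k g).aemeasurable]
  refine tsum_congr fun k => ?_
  rw [lintegral_finsetSum _ fun g _ => hterm k g, mul_sum]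
  exact sum_congr rfl fun g _ => lintegral_indicator_mul_prod_eq hN' hC' hW' hind k g

end RandomSum

/-- One generation of the recursion in `IsWBP`. -/
def IsWBPStep (N : Ω → ℕ) (C V V' : Ω → ℝ) (μ : Measure Ω) : Prop :=
  ∃ (N' : Ω → ℕ) (C' : ℕ → Ω → ℝ) (W' : ℕ → Ω → ℝ),
    Measurable N' ∧ (∀ i, Measurable (C' i)) ∧ (∀ i, Measurable (W' i)) ∧
    Measure.map N' μ = Measure.map N μ ∧
    (∀ i, Measure.map (C' i) μ = Measure.map C μ) ∧
    (∀ i, Measure.map (W' i) μ = Measure.map V μ) ∧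
    iIndepFun
      (fun j : (ℕ ⊕ ℕ) ⊕ Unit =>
        Sum.elim (Sum.elim C' W') (fun _ ω => (N' ω : ℝ)) j) μ ∧
    Measure.map V' μ =
      Measure.map (fun ω => ∑ i ∈ Finset.range (N' ω), C' i ω * W' i ω) μ

theorem IsWBPStep.lmoment_le {N : Ω → ℕ} {C V V' : Ω → ℝ} (h : IsWBPStep N C V V' μ)
    (hN : Measurable N) (hC : Measurable C) (hV : Measurable V) (hV' : Measurable V')
    (hC0 : ∀ ω, 0 ≤ C ω) (hV0 : ∀ ω, 0 ≤ V ω) {q : ℕ} (hq : 1 ≤ q) {B : ℝ≥0∞}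
    (hB : ∀ m, 1 ≤ m → m < q → lmoment C m μ * lmoment V m μ ≤ B) :
    lmoment V' q μ ≤ lmoment (fun ω => (N ω : ℝ)) 1 μ * (lmoment C q μ * lmoment V q μ)
      + lmoment (fun ω => (N ω : ℝ)) q μ * (B ^ 2 * max B 1 ^ q) := by
  obtain ⟨N', C', W', hN', hC', hW', hlawN, hlawC, hlawW, hind, hlaw⟩ := h
  set u : ℕ → ℝ≥0∞ := fun m => lmoment C m μ * lmoment V m μ
  set E := B ^ 2 * max B 1 ^ q
  have hsum : Measurable fun ω => ∑ i ∈ range (N' ω), C' i ω * W' i ω :=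
    measurable_sum_range hN' fun i => (hC' i).mul (hW' i)
  have hC'0 := fun i => ae_nonneg_of_map_eq (hC' i) hC (hlawC i) hC0
  have hW'0 := fun i => ae_nonneg_of_map_eq (hW' i) hV (hlawW i) hV0
  have hlevel : ∀ k, μ {ω | N' ω = k} = μ {ω | N ω = k} := fun k => by
    change μ (N' ⁻¹' {k}) = μ (N ⁻¹' {k})
    rw [← Measure.map_apply hN' (measurableSet_singleton k), hlawN,
      Measure.map_apply hN (measurableSet_singleton k)]
  calc lmoment V' q μ
      = lmoment (fun ω => ∑ i ∈ range (N' ω), C' i ω * W' i ω) q μ :=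
        lmoment_congr_of_map_eq hV' hsum hlaw q
    _ = ∫⁻ ω, (∑ i ∈ range (N' ω), ENNReal.ofReal (C' i ω) * ENNReal.ofReal (W' i ω)) ^ q ∂μ := by
        refine lintegral_congr_ae ?_
        filter_upwards [ae_all_iff.2 hC'0, ae_all_iff.2 hW'0] with ω hCω hWω
        rw [ENNReal.ofReal_sum_of_nonneg fun i _ => mul_nonneg (hCω i) (hWω i)]
        simp_rw [ENNReal.ofReal_mul (hCω _)]
    _ = ∑' k, μ {ω | N ω = k} * ∑ g ∈ piFinset fun _ : Fin q => range k,
          ∏ j ∈ univ.image g, u #{i | g i = j} := by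
        rw [lintegral_pow_sum_range_eq_tsum hN' hC' hW' hind]
        simp_rw [hlevel, lmoment_congr_of_map_eq (hC' _) hC (hlawC _),
          lmoment_congr_of_map_eq (hW' _) hV (hlawW _)]
        rfl
    _ ≤ ∑' k, μ {ω | N ω = k} * (k * u q + k ^ q * E) :=
        ENNReal.tsum_le_tsum fun k => mul_le_mul_right (sum_prod_fiber_le u hq k hB) _
    _ = _ := by
        rw [lmoment_natCast_eq_tsum hN, lmoment_natCast_eq_tsum hN, ← ENNReal.tsum_mul_right,
          ← ENNReal.tsum_mul_right, ← ENNReal.tsum_add]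
        exact tsum_congr fun k => by ring

theorem IsWBPStep.lmoment_le_of_le_mul {N : Ω → ℕ} {C V V' : Ω → ℝ} (h : IsWBPStep N C V V' μ)
    (hN : Measurable N) (hC : Measurable C) (hV : Measurable V) (hV' : Measurable V')
    (hC0 : ∀ ω, 0 ≤ C ω) (hV0 : ∀ ω, 0 ≤ V ω) {q : ℕ} (hq : 1 ≤ q) {c K r : ℝ≥0∞}
    (hc : ∀ m, 1 ≤ m → m ≤ q → lmoment C m μ ≤ c)
    (hK : ∀ m, 1 ≤ m → m < q → lmoment V m μ ≤ K * r) (hr : r ≤ 1) :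
    lmoment V' q μ ≤ lmoment (fun ω => (N ω : ℝ)) 1 μ * c * lmoment V q μ
      + lmoment (fun ω => (N ω : ℝ)) q μ * ((c * K) ^ 2 * max (c * K) 1 ^ q) * r ^ 2 := by
  have hB : ∀ m, 1 ≤ m → m < q → lmoment C m μ * lmoment V m μ ≤ c * K * r := fun m h1 h2 =>
    (mul_le_mul' (hc m h1 h2.le) (hK m h1 h2)).trans_eq (mul_assoc _ _ _).symm
  refine (h.lmoment_le hN hC hV hV' hC0 hV0 hq hB).trans (add_le_add ?_ ?_)
  · rw [mul_assoc]
    gcongr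
    exact hc q hq le_rfl
  · have hcKr : c * K * r ≤ c * K := mul_le_of_le_one_right' hr
    calc _ ≤ lmoment (fun ω => (N ω : ℝ)) q μ * ((c * K * r) ^ 2 * max (c * K) 1 ^ q) := by
          gcongr
      _ = _ := by ring

end Moments

theorem IsWBP.exists_lmoment_le_mul_pow {Ω : Type*} [MeasureSpace Ω]
    [IsProbabilityMeasure (ℙ : Measure Ω)] {N : Ω → ℕ} {C Q : Ω → ℝ} {W : ℕ → Ω → ℝ}
    (hwbp : IsWBP N C Q W) {p : ℕ} (hp : 1 ≤ p) (hQ : ∀ m ≤ p, lmoment Q m ℙ ≠ ⊤)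
    (hN : ∀ m ≤ p, lmoment (fun ω => (N ω : ℝ)) m ℙ ≠ ⊤) (hC : ∀ m ≤ p, lmoment C m ℙ ≠ ⊤)
    (hρ : lmoment (fun ω => (N ω : ℝ)) 1 ℙ * max (lmoment C 1 ℙ) (lmoment C p ℙ) < 1) :
    ∃ K ≠ ⊤, ∀ n, lmoment (W n) p ℙ ≤
      K * (lmoment (fun ω => (N ω : ℝ)) 1 ℙ * max (lmoment C 1 ℙ) (lmoment C p ℙ)) ^ n := by
  obtain ⟨hNm, hCm, hQm, hWm, hC0, -, hW0, hlaw0, hstep⟩ := hwbp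
  set c := max (lmoment C 1 ℙ) (lmoment C p ℙ)
  set ρ := lmoment (fun ω => (N ω : ℝ)) 1 ℙ * c
  have hc : ∀ m, 1 ≤ m → m ≤ p → lmoment C m ℙ ≤ c := fun m h1 h2 =>
    lmoment_le_max hCm.aemeasurable h1 h2
  have hc_top : c ≠ ⊤ := max_ne_top (hC 1 hp) (hC p le_rfl)
  suffices ∀ q ≤ p, ∃ K ≠ ⊤, ∀ m, 1 ≤ m → m ≤ q → ∀ n, lmoment (W n) m ℙ ≤ K * ρ ^ n by
    obtain ⟨K, hK, hbound⟩ := this p le_rfl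
    exact ⟨K, hK, hbound p hp le_rfl⟩
  intro q
  induction q with
  | zero => exact fun _ => ⟨0, ENNReal.zero_ne_top, fun m h1 h2 => by omega⟩
  | succ q ih =>
    intro hq
    obtain ⟨K, hK, hbound⟩ := ih (by omega)
    set β := c * K
    set D := lmoment (fun ω => (N ω : ℝ)) (q + 1) ℙ * (β ^ 2 * max β 1 ^ (q + 1))
    have hrec : ∀ n, lmoment (W (n + 1)) (q + 1) ℙ
        ≤ ρ * lmoment (W n) (q + 1) ℙ + D * ρ ^ (2 * n) := fun n => by
      rw [pow_mul']
      exact IsWBPStep.lmoment_le_of_le_mul (hstep n) hNm hCm (hWm n) (hWm (n + 1)) hC0 (hW0 n)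
        (by omega) (fun m h1 h2 => hc m h1 (h2.trans hq))
        (fun m h1 h2 => hbound m h1 (by omega) n) (pow_le_one₀ zero_le hρ.le)
    have hD0 : ρ = 0 → D = 0 := fun h0 => by
      rcases mul_eq_zero.1 h0 with h | h
      · exact mul_eq_zero_of_left
          (lmoment_eq_zero_of_lmoment_one_eq_zero (by fun_prop) h _ (by omega)) _
      · simp [D, β, h]
    have hD : D ≠ ⊤ := ENNReal.mul_ne_top (hN _ hq) (ENNReal.mul_ne_top
      (ENNReal.pow_ne_top (ENNReal.mul_ne_top hc_top hK))
      (ENNReal.pow_ne_top (max_ne_top (ENNReal.mul_ne_top hc_top hK) ENNReal.one_ne_top)))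
    have ha0 : lmoment (W 0) (q + 1) ℙ ≠ ⊤ := by
      rw [lmoment_congr_of_map_eq (hWm 0) hQm hlaw0]; exact hQ _ hq
    obtain ⟨K', hK', hbound'⟩ := exists_le_mul_pow_of_le_mul_add_mul_pow hρ ha0 hD hD0 hrec
    refine ⟨max K K', max_ne_top hK hK', fun m h1 h2 n => ?_⟩
    rcases Nat.lt_or_ge m (q + 1) with hm | hm
    · exact (hbound m h1 (by omega) n).trans (by gcongr; exact le_max_left _ _)
    · obtain rfl : m = q + 1 := by omega
      exact (hbound' n).trans (by gcongr; exact le_max_right _ _)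

theorem wbp_integer_moment_bound_general
    {Ω : Type*} [MeasureSpace Ω] [IsProbabilityMeasure (ℙ : Measure Ω)]
    (N : Ω → ℕ) (C : Ω → ℝ) (Q : Ω → ℝ) (W : ℕ → Ω → ℝ)
    (hwbp : IsWBP N C Q W)
    (p : ℕ) (hp : 2 ≤ p)
    (hQp : Integrable (fun ω => Q ω ^ p) ℙ)
    (hNp : Integrable (fun ω => (N ω : ℝ) ^ p) ℙ)
    (hCp : Integrable (fun ω => C ω ^ p) ℙ)
    (hsub : (∫ ω, (N ω : ℝ) ∂ℙ) * max (∫ ω, C ω ^ p ∂ℙ) (∫ ω, C ω ∂ℙ) < 1) :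
    ∃ K : ℝ, 0 < K ∧ ∀ n : ℕ,
      ∫⁻ ω, ENNReal.ofReal (W n ω ^ p) ∂ℙ ≤
        ENNReal.ofReal
          (K * ((∫ ω, (N ω : ℝ) ∂ℙ) * max (∫ ω, C ω ∂ℙ) (∫ ω, C ω ^ p ∂ℙ)) ^ n) := by
  obtain ⟨hNm, hCm, -, -, hC0, hQ0, hW0, -⟩ := id hwbp
  have hNm' : Measurable fun ω => (N ω : ℝ) := measurable_from_top.comp hNm
  have hN0 : ∀ ω, 0 ≤ (N ω : ℝ) := fun ω => Nat.cast_nonneg _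
  have hNfin := fun m (hm : m ≤ p) => lmoment_ne_top_of_integrable_pow hN0 hNp hm
  have hCfin := fun m (hm : m ≤ p) => lmoment_ne_top_of_integrable_pow hC0 hCp hm
  have hρ0 : 0 ≤ (∫ ω, (N ω : ℝ) ∂ℙ) * max (∫ ω, C ω ∂ℙ) (∫ ω, C ω ^ p ∂ℙ) :=
    mul_nonneg (integral_nonneg hN0) (le_max_of_le_left (integral_nonneg hC0))
  have hρ : lmoment (fun ω => (N ω : ℝ)) 1 ℙ * max (lmoment C 1 ℙ) (lmoment C p ℙ)
      = ENNReal.ofReal ((∫ ω, (N ω : ℝ) ∂ℙ) * max (∫ ω, C ω ∂ℙ) (∫ ω, C ω ^ p ∂ℙ)) := by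
    rw [lmoment_one_eq_ofReal_integral hNm'.aestronglyMeasurable hN0 (hNfin 1 (by omega)),
      lmoment_one_eq_ofReal_integral hCm.aestronglyMeasurable hC0 (hCfin 1 (by omega)),
      lmoment_eq_ofReal_integral hC0 hCp, ← ENNReal.ofReal_max,
      ← ENNReal.ofReal_mul (integral_nonneg hN0)]
  obtain ⟨K, hK, hbound⟩ := hwbp.exists_lmoment_le_mul_pow (by omega)
    (fun m hm => lmoment_ne_top_of_integrable_pow hQ0 hQp hm) hNfin hCfin
    (by rw [hρ, ENNReal.ofReal_lt_one, max_comm]; exact hsub)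
  refine ⟨K.toReal + 1, by positivity, fun n => ?_⟩
  calc ∫⁻ ω, ENNReal.ofReal (W n ω ^ p) ∂ℙ = lmoment (W n) p ℙ :=
        lintegral_congr fun ω => ENNReal.ofReal_pow (hW0 n ω) p
    _ ≤ ENNReal.ofReal (K.toReal + 1) * ENNReal.ofReal
          ((∫ ω, (N ω : ℝ) ∂ℙ) * max (∫ ω, C ω ∂ℙ) (∫ ω, C ω ^ p ∂ℙ)) ^ n := by
        rw [← hρ]
        refine (hbound n).trans (mul_le_mul_left ?_ _)
        exact (ENNReal.le_ofReal_iff_toReal_le hK (by positivity)).2 (by linarith)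
    _ = _ := by
        rw [← ENNReal.ofReal_pow hρ0, ← ENNReal.ofReal_mul (by positivity)]

theorem wbp_integer_moment_bound
    {Ω : Type*} [MeasureSpace Ω] [IsProbabilityMeasure (ℙ : Measure Ω)]
    (N : Ω → ℕ) (C : Ω → ℝ) (Q : Ω → ℝ) (W : ℕ → Ω → ℝ)
    (hwbp : IsWBP N C Q W)
    (p : ℕ) (hp : 2 ≤ p)
    (hQp : Integrable (fun ω => Q ω ^ p) ℙ)
    (hNp : Integrable (fun ω => (N ω : ℝ) ^ p) ℙ)
    (hC1 : Integrable C ℙ) (hCp : Integrable (fun ω => C ω ^ p) ℙ)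
    (hsub : (∫ ω, (N ω : ℝ) ∂ℙ) * max (∫ ω, C ω ^ p ∂ℙ) (∫ ω, C ω ∂ℙ) < 1) :
    ∃ K : ℝ, 0 < K ∧ ∀ n : ℕ,
      ∫⁻ ω, ENNReal.ofReal (W n ω ^ p) ∂ℙ ≤
        ENNReal.ofReal
          (K * ((∫ ω, (N ω : ℝ) ∂ℙ) * max (∫ ω, C ω ∂ℙ) (∫ ω, C ω ^ p ∂ℙ)) ^ n) :=
  wbp_integer_moment_bound_general N C Q W hwbp p hp hQp hNp hCp hsub
end

section
/- Let $Y_1, Y_2, \dots$ be nonnegative iid random variables with common law that of $Y$ where $E[Y^\beta] < \infty$ for some $0 < \beta < 1$. Then for all integers $1 \leq k \leq x^\beta / E[Y^\beta]$ and all $x \geq e^{(Ke)^{1/(1-\beta)}}$, $P\left( \sum_{i=1}^k Y_i > x, \ \max_{1 \leq i \leq k} Y_i \leq x/\log x \right) \leq \exp\left( -(1-\beta)(\log x)(\log\log x)\left( 1 - \frac{\log(eK)}{(1-\beta)\log\log x} \right) \right)$, where $K = K(\beta) = 2^\beta\left(1 + (2e+1)\sup_{t \geq 1/2} t^\beta e^{-t}\right)$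 is a constant not depending on $k$ or the distribution of $Y$. -/
/-!
On the event, every `Y i` is at most `y = x / log x`, so the sum equals `∑ min (Y i) y` and
the Chernoff bound applies to these bounded variables. Convexity of `exp` on `[0, θ y]` bounds
the mgf of `min Y y` by `exp (E[min Y y] / y * exp (θ y))`, and `min Y y ≤ Y ^ β * y ^ (1 - β)`
gives `E[min Y y] ≤ E[Y ^ β] y ^ (1 - β)`. With `θ y = (1 - β) log log x` and
`k E[Y ^ β] ≤ x ^ β` the exponent of the bound becomes `log x - (1 - β) log x log log x`; the
constant only enters through `K ≥ 1`.
-/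

open MeasureTheory ProbabilityTheory Filter Set Finset Real

lemma min_le_rpow_mul_rpow {a b β : ℝ} (ha : 0 ≤ a) (hb : 0 ≤ b) (hβ0 : 0 ≤ β)
    (hβ1 : β ≤ 1) :
    min a b ≤ a ^ β * b ^ (1 - β) :=
  calc min a b = min a b ^ β * min a b ^ (1 - β) := by
        rw [← rpow_add' (le_min ha hb) (by norm_num), add_sub_cancel, rpow_one]
    _ ≤ a ^ β * b ^ (1 - β) := by
        have : 0 ≤ 1 - β := by linarith
        gcongr
        exacts [min_le_left a b, min_le_right a b]

lemma exp_mul_le_one_add_div_mul_sub_one {θ y z : ℝ} (hy : 0 < y) (hz0 : 0 ≤ z)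
    (hzy : z ≤ y) :
    exp (θ * z) ≤ 1 + z / y * (exp (θ * y) - 1) := by
  have hzy' : z / y ≤ 1 := (div_le_one hy).2 hzy
  have hchord := convexOn_exp.2 (mem_univ 0) (mem_univ (θ * y)) (sub_nonneg.2 hzy')
    (div_nonneg hz0 hy.le) (sub_add_cancel 1 (z / y))
  have hpoint : z / y * (θ * y) = θ * z := by field_simp
  simp only [smul_eq_mul, mul_zero, zero_add, exp_zero, mul_one, hpoint] at hchord
  linarith

lemma rpow_mul_div_rpow_neg_mul_exp_eq {x L β : ℝ} (hx : 0 < x) (hL : 0 < L) :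
    x ^ β * (x / L) ^ (-β) * exp ((1 - β) * log L) = L := by
  rw [rpow_neg (div_pos hx hL).le, div_rpow hx.le hL.le, mul_comm (1 - β),
    ← rpow_def_of_pos hL, inv_div, mul_div_cancel₀ _ (rpow_pos_of_pos hx β).ne',
    ← rpow_add hL, add_sub_cancel, rpow_one]

lemma one_le_two_rpow_mul_one_add_mul_iSup {β c : ℝ} (hβ : 0 ≤ β) (hc : 0 ≤ c) :
    1 ≤ 2 ^ β * (1 + c * ⨆ t ∈ Ici (1/2 : ℝ), t ^ β * exp (-t)) := by
  have hsup : 0 ≤ ⨆ t ∈ Ici (1/2 : ℝ), t ^ β * exp (-t) :=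
    iSup_nonneg fun t => iSup_nonneg fun ht => by
      have : 0 ≤ t := le_trans (by norm_num) ht
      positivity
  exact one_le_mul_of_one_le_of_one_le (one_le_rpow one_le_two hβ)
    (le_add_of_nonneg_right (mul_nonneg hc hsup))

section

variable {Ω : Type*} {m : MeasurableSpace Ω} {μ : Measure Ω}

lemma integral_min_le_integral_rpow_mul {X : Ω → ℝ} {y β : ℝ} (hX : ∀ ω, 0 ≤ X ω)
    (hy : 0 ≤ y) (hβ0 : 0 ≤ β) (hβ1 : β ≤ 1)
    (hXβ : Integrable (fun ω => X ω ^ β) μ) :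
    ∫ ω, min (X ω) y ∂μ ≤ (∫ ω, X ω ^ β ∂μ) * y ^ (1 - β) := by
  rw [← integral_mul_const]
  exact integral_mono_of_nonneg (.of_forall fun ω => le_min (hX ω) hy) (hXβ.mul_const _)
    (.of_forall fun ω => min_le_rpow_mul_rpow (hX ω) hy hβ0 hβ1)

variable [IsProbabilityMeasure μ]

lemma mgf_le_exp_integral_div_mul_exp {Z : Ω → ℝ} {y : ℝ} (hZ : Measurable Z) (hy : 0 < y)
    (hZ0 : ∀ ω, 0 ≤ Z ω) (hZy : ∀ ω, Z ω ≤ y) (θ : ℝ) :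
    mgf Z μ θ ≤ exp ((∫ ω, Z ω ∂μ) / y * exp (θ * y)) := by
  have hZint : Integrable Z μ := .of_bound hZ.aestronglyMeasurable y
    (.of_forall fun ω => by rw [norm_of_nonneg (hZ0 ω)]; exact hZy ω)
  have hchord_int : Integrable (fun ω => 1 + Z ω / y * (exp (θ * y) - 1)) μ :=
    (integrable_const 1).add ((hZint.div_const y).mul_const _)
  have hmean : 0 ≤ (∫ ω, Z ω ∂μ) / y := div_nonneg (integral_nonneg hZ0) hy.le
  calc mgf Z μ θ ≤ ∫ ω, 1 + Z ω / y * (exp (θ * y) - 1) ∂μ :=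
        integral_mono_of_nonneg (.of_forall fun ω => (exp_pos _).le) hchord_int
          (.of_forall fun ω => exp_mul_le_one_add_div_mul_sub_one hy (hZ0 ω) (hZy ω))
    _ = 1 + (∫ ω, Z ω ∂μ) / y * (exp (θ * y) - 1) := by
        rw [integral_add (integrable_const 1) ((hZint.div_const y).mul_const _),
          integral_mul_const, integral_div, integral_const, probReal_univ, one_smul]
    _ ≤ (∫ ω, Z ω ∂μ) / y * exp (θ * y) + 1 := by nlinarith
    _ ≤ exp ((∫ ω, Z ω ∂μ) / y * exp (θ * y)) := add_one_le_exp _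

variable {Y : ℕ → Ω → ℝ} {β : ℝ}

lemma mgf_sum_min_le (hYmeas : ∀ i, Measurable (Y i)) (hYnn : ∀ i ω, 0 ≤ Y i ω)
    (hYindep : iIndepFun Y μ) (hYid : ∀ i, IdentDistrib (Y i) (Y 0) μ μ)
    (hβ0 : 0 ≤ β) (hβ1 : β ≤ 1) (hYβ : Integrable (fun ω => Y 0 ω ^ β) μ)
    {y : ℝ} (hy : 0 < y) (θ : ℝ) (k : ℕ) :
    mgf (∑ i ∈ range k, fun ω => min (Y i ω) y) μ θ ≤
      exp (k * ((∫ ω, Y 0 ω ^ β ∂μ) * y ^ (-β) * exp (θ * y))) := by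
  have htrunc_meas : Measurable fun a : ℝ => min a y := measurable_id.min measurable_const
  have hmean : (∫ ω, min (Y 0 ω) y ∂μ) / y ≤ (∫ ω, Y 0 ω ^ β ∂μ) * y ^ (-β) := by
    rw [div_le_iff₀ hy, mul_assoc, ← rpow_add_one hy.ne', neg_add_eq_sub]
    exact integral_min_le_integral_rpow_mul (hYnn 0) hy.le hβ0 hβ1 hYβ
  have htrunc_indep : iIndepFun (fun i ω => min (Y i ω) y) μ :=
    hYindep.comp (fun _ a => min a y) fun _ => htrunc_meas
  rw [htrunc_indep.mgf_sum fun i => (hYmeas i).min measurable_const,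
    prod_eq_pow_card fun i _ => mgf_congr_of_identDistrib (fun ω => min (Y i ω) y)
      (fun ω => min (Y 0 ω) y) ((hYid i).comp htrunc_meas) θ, card_range]
  calc mgf (fun ω => min (Y 0 ω) y) μ θ ^ k
      ≤ exp ((∫ ω, min (Y 0 ω) y ∂μ) / y * exp (θ * y)) ^ k := by
        gcongr
        · exact mgf_nonneg
        · exact mgf_le_exp_integral_div_mul_exp ((hYmeas 0).min measurable_const) hy
            (fun ω => le_min (hYnn 0 ω) hy.le) (fun ω => min_le_right _ _) θ
    _ ≤ exp (k * ((∫ ω, Y 0 ω ^ β ∂μ) * y ^ (-β) * exp (θ * y))) := by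
        rw [← exp_nat_mul]
        gcongr

lemma measureReal_sum_gt_and_forall_le_le (hYmeas : ∀ i, Measurable (Y i))
    (hYnn : ∀ i ω, 0 ≤ Y i ω) (hYindep : iIndepFun Y μ)
    (hYid : ∀ i, IdentDistrib (Y i) (Y 0) μ μ)
    (hβ0 : 0 ≤ β) (hβ1 : β ≤ 1) (hYβ : Integrable (fun ω => Y 0 ω ^ β) μ)
    {y θ : ℝ} (hy : 0 < y) (hθ : 0 ≤ θ) (k : ℕ) (x : ℝ) :
    μ.real {ω | x < ∑ i ∈ range k, Y i ω ∧ ∀ i ∈ range k, Y i ω ≤ y} ≤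
      exp (-θ * x + k * ((∫ ω, Y 0 ω ^ β ∂μ) * y ^ (-β) * exp (θ * y))) := by
  set S := ∑ i ∈ range k, fun ω => min (Y i ω) y
  have hS_le : ∀ ω, S ω ≤ k * y := fun ω => by
    simpa [S, Finset.sum_apply] using
      sum_le_sum fun i (_ : i ∈ range k) => min_le_right (Y i ω) y
  have hS_meas : Measurable S := by fun_prop
  have hexpS_int : Integrable (fun ω => exp (θ * S ω)) μ :=
    .of_bound (hS_meas.const_mul θ).exp.aestronglyMeasurable (exp (θ * (k * y)))
      (.of_forall fun ω => by
        rw [norm_of_nonneg (exp_pos _).le]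
        exact exp_le_exp.2 (mul_le_mul_of_nonneg_left (hS_le ω) hθ))
  have hevent :
      {ω | x < ∑ i ∈ range k, Y i ω ∧ ∀ i ∈ range k, Y i ω ≤ y} ⊆
        {ω | x ≤ S ω} :=
    fun ω ⟨hsum, hmax⟩ => by
      simpa [S, Finset.sum_apply, sum_congr rfl fun i hi => min_eq_left (hmax i hi)] using hsum.le
  calc μ.real {ω | x < ∑ i ∈ range k, Y i ω ∧ ∀ i ∈ range k, Y i ω ≤ y}
      ≤ μ.real {ω | x ≤ S ω} := measureReal_mono hevent
    _ ≤ exp (-θ * x) * mgf S μ θ := measure_ge_le_exp_mul_mgf x hθ hexpS_int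
    _ ≤ exp (-θ * x) * exp (k * ((∫ ω, Y 0 ω ^ β ∂μ) * y ^ (-β) * exp (θ * y))) := by
        gcongr
        exact mgf_sum_min_le hYmeas hYnn hYindep hYid hβ0 hβ1 hYβ hy θ k
    _ = _ := (exp_add _ _).symm

theorem measureReal_sum_gt_and_forall_le_div_log_le (hYmeas : ∀ i, Measurable (Y i))
    (hYnn : ∀ i ω, 0 ≤ Y i ω) (hYindep : iIndepFun Y μ)
    (hYid : ∀ i, IdentDistrib (Y i) (Y 0) μ μ)
    (hβ0 : 0 ≤ β) (hβ1 : β ≤ 1) (hYβ : Integrable (fun ω => Y 0 ω ^ β) μ)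
    {k : ℕ} {x : ℝ} (hx0 : 0 < x) (hx : 1 < log x)
    (hkx : k * ∫ ω, Y 0 ω ^ β ∂μ ≤ x ^ β) :
    μ.real {ω | x < ∑ i ∈ range k, Y i ω ∧ ∀ i ∈ range k, Y i ω ≤ x / log x} ≤
      exp (log x * (1 - (1 - β) * log (log x))) := by
  set L := log x
  have hL0 : 0 < L := one_pos.trans hx
  have hy : 0 < x / L := div_pos hx0 hL0
  -- chosen so that `exp (θ * (x / L)) = L ^ (1 - β)`, which makes the mgf bound exactly `exp L`
  set θ := (1 - β) * log L / (x / L)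
  have hθ : 0 ≤ θ := div_nonneg (mul_nonneg (by linarith) (log_pos hx).le) hy.le
  have hθy : θ * (x / L) = (1 - β) * log L := div_mul_cancel₀ _ hy.ne'
  have hθx : θ * x = (1 - β) * log L * L := by
    simp only [θ]
    field_simp
  have hlog_mgf : k * ((∫ ω, Y 0 ω ^ β ∂μ) * (x / L) ^ (-β) * exp (θ * (x / L))) ≤ L :=
    calc k * ((∫ ω, Y 0 ω ^ β ∂μ) * (x / L) ^ (-β) * exp (θ * (x / L)))
        = (k * ∫ ω, Y 0 ω ^ β ∂μ) * ((x / L) ^ (-β) * exp (θ * (x / L))) := by ring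
      _ ≤ x ^ β * ((x / L) ^ (-β) * exp (θ * (x / L))) := by gcongr
      _ = L := by rw [← mul_assoc, hθy, rpow_mul_div_rpow_neg_mul_exp_eq hx0 hL0]
  refine (measureReal_sum_gt_and_forall_le_le hYmeas hYnn hYindep hYid hβ0 hβ1 hYβ hy hθ k
    x).trans (exp_le_exp.2 ?_)
  rw [neg_mul, hθx]
  linarith

end

theorem truncated_chernoff_bound
    {Ω : Type*} [MeasureSpace Ω] [IsProbabilityMeasure (ℙ : Measure Ω)]
    (Y : ℕ → Ω → ℝ) (hYmeas : ∀ i, Measurable (Y i)) (hYnn : ∀ i ω, 0 ≤ Y i ω)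
    (hYindep : iIndepFun Y ℙ)
    (hYid : ∀ i, Measure.map (Y i) ℙ = Measure.map (Y 0) ℙ)
    (β : ℝ) (hβ0 : 0 < β) (hβ1 : β < 1)
    (hYβ : Integrable (fun ω => Y 0 ω ^ β) ℙ)
    (K : ℝ)
    (hK : K = 2 ^ β * (1 + (2 * Real.exp 1 + 1) *
      ⨆ t ∈ Set.Ici (1/2 : ℝ), t ^ β * Real.exp (-t))) :
    ∀ (k : ℕ) (x : ℝ), 1 ≤ k →
      (k : ℝ) ≤ x ^ β / ∫ ω, Y 0 ω ^ β ∂ℙ →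
      Real.exp ((K * Real.exp 1) ^ (1 / (1 - β))) ≤ x →
      (ℙ {ω | x < ∑ i ∈ Finset.range k, Y i ω ∧
          ∀ i ∈ Finset.range k, Y i ω ≤ x / Real.log x}).toReal ≤
        Real.exp (-((1 - β) * Real.log x * Real.log (Real.log x) *
          (1 - Real.log (Real.exp 1 * K) / ((1 - β) * Real.log (Real.log x))))) := by
  intro k x _ hkx hx
  have hK1 : 1 ≤ K := hK ▸ one_le_two_rpow_mul_one_add_mul_iSup hβ0.le (by positivity)
  have hx0 : 0 < x := (exp_pos _).trans_le hx
  have hlog : 1 < log x := by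
    refine (one_lt_rpow ?_ (by simp [hβ1])).trans_le ((le_log_iff_exp_le hx0).2 hx)
    exact (one_lt_exp_iff.2 one_pos).trans_le (le_mul_of_one_le_left (exp_pos 1).le hK1)
  have hkm : k * ∫ ω, Y 0 ω ^ β ∂ℙ ≤ x ^ β := by
    rcases (integral_nonneg (f := fun ω => Y 0 ω ^ β) fun ω =>
      rpow_nonneg (hYnn 0 ω) β).eq_or_lt with hm | hm
    · rw [← hm, mul_zero]; positivity
    · exact (le_div_iff₀ hm).1 hkx
  refine (measureReal_sum_gt_and_forall_le_div_log_le hYmeas hYnn hYindep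
    (fun i => ⟨(hYmeas i).aemeasurable, (hYmeas 0).aemeasurable, hYid i⟩) hβ0.le hβ1.le hYβ
    hx0 hlog hkm).trans (exp_le_exp.2 ?_)
  have hℓ : 0 < log (log x) := log_pos hlog
  have hβ' : 0 < 1 - β := by linarith
  rw [log_mul (exp_ne_zero 1) (by positivity), log_exp]
  field_simp
  nlinarith [log_nonneg hK1]
end
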